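/- arXiv:1609.01832 — 3 statements merged into one kernel-verified Lean document; each statement's English description precedes it below -/
import Mathlib

section
/- Let r ≥ 2 and let R be the r×r integer matrix with first row all 1's, and for 2 ≤ i ≤ r, row i has entry r−i+1 in column i−1, entry i−1 in column i, and zeros elsewhere. Then R has rank r−1. -/
/-!
The first coordinate of `R *ᵥ w` is `∑ w`, and for `k ≥ 1` the `k`-th one is
`(r - k) w_{k-1} + k w_k`. Since the coefficients `k` are nonzero, these recurrence rows determine a
kernel vector from its first coordinate, so the kernel has dimension at most one. The alternating
binomial vector `w_k = (-1)^k C(r-1, k)` solves the recurrence, by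
`(k+1) C(r-1, k+1) = (r-1-k) C(r-1, k)`, and has coordinate sum `(1 - 1)^(r-1) = 0`, so it spans the
kernel. Rank–nullity gives rank `r - 1`.
-/

open Matrix

def insertionMatrix (K : Type*) [Ring K] (r : ℕ) : Matrix (Fin r) (Fin r) K :=
  Matrix.of fun i j =>
    if i.val = 0 then 1
    else if j.val + 1 = i.val then (r : K) - i.val
    else if j = i then (i.val : K)
    else 0

def alternatingChoose (K : Type*) [Ring K] (n : ℕ) : Fin (n + 1) → K :=
  fun i => (-1) ^ (i : ℕ) * n.choose i

namespace insertionMatrix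

variable {K : Type*} {n : ℕ}

section Ring

variable [Ring K]

theorem mulVec_apply_zero (w : Fin (n + 1) → K) :
    (insertionMatrix K (n + 1) *ᵥ w) 0 = ∑ j, w j := by
  simp [insertionMatrix, mulVec, dotProduct]

theorem mulVec_apply_succ (w : Fin (n + 1) → K) (k : Fin n) :
    (insertionMatrix K (n + 1) *ᵥ w) k.succ = (n - k) * w k.castSucc + (k + 1) * w k.succ := by
  have hrow : insertionMatrix K (n + 1) k.succ =
      Pi.single k.castSucc ((n : K) - k) + Pi.single k.succ ((k : K) + 1) := by
    ext j
    simp only [insertionMatrix, of_apply, Fin.val_succ, Pi.add_apply, Pi.single_apply, Fin.ext_iff,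
      Fin.val_castSucc]
    push_cast
    split_ifs <;> first | omega | abel
  rw [mulVec, hrow, add_dotProduct, single_dotProduct, single_dotProduct]

end Ring

section Field

variable [Field K] [CharZero K]

theorem mulVec_alternatingChoose (hn : n ≠ 0) :
    insertionMatrix K (n + 1) *ᵥ alternatingChoose K n = 0 := by
  ext i
  induction i using Fin.cases with
  | zero =>
    rw [mulVec_apply_zero, Pi.zero_apply]
    simp only [alternatingChoose]
    rw [Fin.sum_univ_eq_sum_range (fun j => (-1 : K) ^ j * n.choose j)]
    exact_mod_cast Int.alternating_sum_range_choose_of_ne hn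
  | succ k =>
    have hchoose : (n.choose (k + 1) : K) * (k + 1) = n.choose k * (n - k) := by
      rw [← Nat.cast_sub k.is_lt.le]
      exact_mod_cast Nat.choose_succ_right_eq n k
    rw [mulVec_apply_succ, Pi.zero_apply]
    simp only [alternatingChoose, Fin.val_succ, Fin.val_castSucc]
    linear_combination (-(-1 : K) ^ (k : ℕ)) * hchoose

theorem eq_zero_of_mulVec_eq_zero {w : Fin (n + 1) → K} (hw : insertionMatrix K (n + 1) *ᵥ w = 0)
    (h0 : w 0 = 0) : w = 0 := by
  ext i
  induction i using Fin.induction with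
  | zero => exact h0
  | succ k ih =>
    have hrow := congrFun hw k.succ
    rw [mulVec_apply_succ, ih, Pi.zero_apply] at hrow
    simpa [Nat.cast_add_one_ne_zero] using hrow

theorem ker_mulVecLin (hn : n ≠ 0) :
    LinearMap.ker (insertionMatrix K (n + 1)).mulVecLin = K ∙ alternatingChoose K n := by
  apply le_antisymm
  · intro w hw
    rw [LinearMap.mem_ker, mulVecLin_apply] at hw
    have hdiff : w - w 0 • alternatingChoose K n = 0 := by
      refine eq_zero_of_mulVec_eq_zero ?_ (by simp [alternatingChoose])
      rw [mulVec_sub, mulVec_smul, hw, mulVec_alternatingChoose hn, smul_zero, sub_zero]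
    exact Submodule.mem_span_singleton.mpr ⟨w 0, (sub_eq_zero.mp hdiff).symm⟩
  · rw [Submodule.span_singleton_le_iff_mem, LinearMap.mem_ker, mulVecLin_apply]
    exact mulVec_alternatingChoose hn

theorem rank_eq (hn : n ≠ 0) : (insertionMatrix K (n + 1)).rank = n := by
  have hv : alternatingChoose K n ≠ 0 := fun h => by
    simpa [alternatingChoose] using congrFun h 0
  have hrn := LinearMap.finrank_range_add_finrank_ker (insertionMatrix K (n + 1)).mulVecLin
  rw [ker_mulVecLin hn, finrank_span_singleton hv, Module.finrank_fin_fun] at hrn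
  rw [Matrix.rank]
  omega

end Field

end insertionMatrix

/-- The transformation matrix `R` (first row all ones; row `i ≥ 2` has entry
`r-i+1` in column `i-1` and entry `i-1` in column `i`) has rank `r-1`.
Rows and columns are indexed by `Fin r`, so `Fin`-index `i` corresponds to
the paper's index `i+1`. -/
theorem stmt_2 (r : ℕ) (hr : 2 ≤ r)
    (R : Matrix (Fin r) (Fin r) ℚ)
    (hR : ∀ i j : Fin r, R i j =
      if i.val = 0 then 1
      else if j.val + 1 = i.val then (r : ℚ) - i.val
      else if j = i then (i.val : ℚ)
      else 0) :
    R.rank = r - 1 := by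
  obtain ⟨n, rfl⟩ : ∃ n, r = n + 1 := ⟨r - 1, by omega⟩
  obtain rfl : R = insertionMatrix ℚ (n + 1) := Matrix.ext hR
  simpa using insertionMatrix.rank_eq (K := ℚ) (n := n) (by omega)
end

section
/- Let r, s ≥ 2. Define the linear maps on r×s rational matrices: (R_α C)^{1j} = Σ_{i=1}^r C^{ij}, (R_α C)^{ij} = (i−1)C^{ij} + (r−i+1)C^{(i−1)j} for i ≥ 2; and (S_β C)^{i1} = Σ_{j=1}^s C^{ij}, (S_β C)^{ij} = (j−1)C^{ij} + (s−j+1)C^{i(j−1)} for j ≥ 2. Then the space of matrices C with R_α C = 0 and S_β C = 0 is one-dimensional, spanned by C^{ij} = (−1)^{i+j} C(r−1, i−1) C(s−1, j−1). -/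
/-!
Each column `f = C(·, j)` satisfies the first-order recurrence
`(i - 1) f i + (r - i + 1) f (i - 1) = 0` with nonzero leading coefficient for `i ≥ 2`, so it is
determined by `f 1`; the vector `(-1)^i C(r-1, i-1)` solves it because
`C(n, k+1) (k+1) = C(n, k) (n - k)`. The same holds for the rows, so `C` is a multiple of the
outer product of the two alternating binomial vectors. Conversely that outer product also has
vanishing column and row sums, since the alternating sum of a row of Pascal's triangle is `0`.
-/

open Finset

def altBinom (r i : ℕ) : ℚ := (-1) ^ i * (r - 1).choose (i - 1)

-- The rows `i ≥ 2` of `R_α f = 0` for a single column `f`, indexed from `1`.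
def BinomRecurrence (r : ℕ) (f : ℕ → ℚ) : Prop :=
  ∀ i, 2 ≤ i → i ≤ r → ((i : ℚ) - 1) * f i + ((r : ℚ) - i + 1) * f (i - 1) = 0

@[simp]
theorem altBinom_one (r : ℕ) : altBinom r 1 = -1 := by
  simp [altBinom]

theorem sum_altBinom {r : ℕ} (hr : 2 ≤ r) : ∑ i ∈ Icc 1 r, altBinom r i = 0 := by
  obtain ⟨n, rfl⟩ : ∃ n, r = n + 1 := ⟨r - 1, by omega⟩
  have h := Int.alternating_sum_range_choose_of_ne (n := n) (by omega)
  rw [← Ico_add_one_right_eq_Icc, sum_Ico_eq_sum_range]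
  simp only [altBinom, pow_add, pow_one, Nat.add_sub_cancel, Nat.add_sub_cancel_left, one_mul,
    neg_mul, sum_neg_distrib, neg_eq_zero]
  exact_mod_cast h

theorem binomRecurrence_altBinom (r : ℕ) : BinomRecurrence r (altBinom r) := by
  intro i hi hir
  obtain ⟨m, rfl⟩ : ∃ m, i = m + 2 := ⟨i - 2, by omega⟩
  have hchoose :
      ((r - 1).choose (m + 1) : ℚ) * (m + 1) = (r - 1).choose m * ((r : ℚ) - 1 - m) := by
    rw [show (r : ℚ) - 1 - m = ((r - 1 - m : ℕ) : ℚ) by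
      push_cast [Nat.cast_sub (by omega : m ≤ r - 1), Nat.cast_sub (by omega : 1 ≤ r)]; ring]
    exact_mod_cast Nat.choose_succ_right_eq (r - 1) m
  simp only [altBinom, Nat.add_sub_cancel, show m + 2 - 1 = m + 1 from rfl]
  push_cast
  linear_combination (-1 : ℚ) ^ m * hchoose

theorem BinomRecurrence.eq_neg_mul_altBinom {r : ℕ} {f : ℕ → ℚ} (hf : BinomRecurrence r f) :
    ∀ i, 1 ≤ i → i ≤ r → f i = -f 1 * altBinom r i := by
  intro i hi hir
  induction i, hi using Nat.le_induction with
  | base => simp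
  | succ i hi ih =>
    have hpos : (i : ℚ) ≠ 0 := by positivity
    have hf_succ := hf (i + 1) (by omega) hir
    have halt := binomRecurrence_altBinom r (i + 1) (by omega) hir
    simp only [Nat.add_sub_cancel, Nat.cast_add, Nat.cast_one, add_sub_cancel_right] at hf_succ halt
    rw [ih (by omega)] at hf_succ
    refine mul_left_cancel₀ hpos ?_
    linear_combination hf_succ + f 1 * halt

theorem binomRecurrence_of_eq_mul_altBinom {r : ℕ} {f : ℕ → ℚ} {c : ℚ}
    (hf : ∀ i, 1 ≤ i → i ≤ r → f i = c * altBinom r i) : BinomRecurrence r f := by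
  intro i hi hir
  rw [hf i (by omega) hir, hf (i - 1) (by omega) (by omega)]
  linear_combination c * binomRecurrence_altBinom r i hi hir

theorem sum_eq_zero_of_eq_mul_altBinom {r : ℕ} (hr : 2 ≤ r) {f : ℕ → ℚ} {c : ℚ}
    (hf : ∀ i, 1 ≤ i → i ≤ r → f i = c * altBinom r i) : ∑ i ∈ Icc 1 r, f i = 0 := by
  rw [sum_congr rfl fun i hi => hf i (mem_Icc.1 hi).1 (mem_Icc.1 hi).2, ← mul_sum,
    sum_altBinom hr, mul_zero]

/-- The joint kernel of the row transformation `R_α` and the column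
transformation `S_β` on `r×s` rational matrices is one-dimensional, spanned by
`C^{ij} = (-1)^{i+j} C(r-1,i-1) C(s-1,j-1)`.  Matrices are `1`-indexed. -/
theorem stmt_5 (r s : ℕ) (hr : 2 ≤ r) (hs : 2 ≤ s) (C : ℕ → ℕ → ℚ) :
    ((∀ j : ℕ, 1 ≤ j → j ≤ s → ∑ i ∈ Finset.Icc 1 r, C i j = 0) ∧
      (∀ i j : ℕ, 2 ≤ i → i ≤ r → 1 ≤ j → j ≤ s →
        ((i : ℚ) - 1) * C i j + ((r : ℚ) - i + 1) * C (i - 1) j = 0) ∧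
      (∀ i : ℕ, 1 ≤ i → i ≤ r → ∑ j ∈ Finset.Icc 1 s, C i j = 0) ∧
      (∀ i j : ℕ, 1 ≤ i → i ≤ r → 2 ≤ j → j ≤ s →
        ((j : ℚ) - 1) * C i j + ((s : ℚ) - j + 1) * C i (j - 1) = 0)) ↔
    (∃ n : ℚ, ∀ i j : ℕ, 1 ≤ i → i ≤ r → 1 ≤ j → j ≤ s →
      C i j = n * (-1 : ℚ) ^ (i + j) * ((r - 1).choose (i - 1)) *
        ((s - 1).choose (j - 1))) := by
  have hsplit : ∀ (n : ℚ) (i j : ℕ), n * (-1 : ℚ) ^ (i + j) * ((r - 1).choose (i - 1)) *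
      ((s - 1).choose (j - 1)) = n * altBinom r i * altBinom s j := by
    intro n i j; rw [altBinom, altBinom, pow_add]; ring
  simp only [hsplit]
  constructor
  · rintro ⟨-, hcols, -, hrows⟩
    refine ⟨C 1 1, fun i j hi hir hj hjs => ?_⟩
    have hcol : BinomRecurrence r (C · j) := fun i h2i hir => hcols i j h2i hir hj hjs
    have hrow : BinomRecurrence s (C 1 ·) := fun j h2j hjs => hrows 1 j le_rfl (by omega) h2j hjs
    rw [hcol.eq_neg_mul_altBinom i hi hir, hrow.eq_neg_mul_altBinom j hj hjs]
    ring
  · rintro ⟨n, hC⟩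
    have hcol (j) (hj : 1 ≤ j) (hjs : j ≤ s) (i) (hi : 1 ≤ i) (hir : i ≤ r) :
        C i j = n * altBinom s j * altBinom r i := by
      rw [hC i j hi hir hj hjs]; ring
    have hrow (i) (hi : 1 ≤ i) (hir : i ≤ r) (j) (hj : 1 ≤ j) (hjs : j ≤ s) :
        C i j = n * altBinom r i * altBinom s j := hC i j hi hir hj hjs
    exact ⟨fun j hj hjs => sum_eq_zero_of_eq_mul_altBinom hr (hcol j hj hjs),
      fun i j h2i hir hj hjs => binomRecurrence_of_eq_mul_altBinom (hcol j hj hjs) i h2i hir,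
      fun i hi hir => sum_eq_zero_of_eq_mul_altBinom hs (hrow i hi hir),
      fun i j hi hir h2j hjs => binomRecurrence_of_eq_mul_altBinom (hrow i hi hir) j h2j hjs⟩
end

section
/- Uniqueness of the BCJ coefficient matrix: let r = s+1 ≥ 3 and suppose an r×s rational matrix C satisfies the inhomogeneous system R_α C = D_α^{(1)} (rows 2..r only, first row unconstrained), C S_β = D_β^{(1)} (columns 2..s only, first column unconstrained), Σ_i C^{ij} = (D_α^{(1)})^{1j}, Σ_j C^{ij} = (D_β^{(1)})^{i1}, together with the extra condition C^{r1} = 0. Then C^{ij} = [i ≤ j]. -/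
/-- The matrix `D_α^{(1)}(r,s)` of the paper (`1`-indexed). -/
def Dalpha (r : ℕ) (i j : ℕ) : ℤ :=
  if i = 1 then (j : ℤ)
  else if i ≤ j then (r : ℤ)
  else if j + 1 = i then (r : ℤ) - i + 1
  else 0

/-- The matrix `D_β^{(1)}(r,s)` of the paper (`1`-indexed). -/
def Dbeta (r s : ℕ) (i j : ℕ) : ℤ :=
  if i = 1 then (s : ℤ)
  else if i = r then 0
  else if j = 1 then (s : ℤ) - i + 1
  else if j = i then (i : ℤ) - 1
  else if i < j then (s : ℤ)
  else 0

/-!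
The row recursion in column `1` determines `C^{i-1,1}` from `C^{i1}` (its coefficient `r - i + 1`
never vanishes), so `C^{r1} = 0` fixes the whole first column. The column recursion then determines
`C^{i,j}` from `C^{i,j-1}` (coefficient `j - 1 ≠ 0`), so the first column fixes every row. Since the
matrix `[i ≤ j]` satisfies both recursions and has `(r,1)`-entry `0`, it is the only solution.
-/

def upperIndicator (i j : ℕ) : ℚ := if i ≤ j then 1 else 0

theorem eq_of_row_recursion (r : ℕ) (D f g : ℕ → ℚ)
    (hf : ∀ i, 2 ≤ i → i ≤ r → ((i : ℚ) - 1) * f i + ((r : ℚ) - i + 1) * f (i - 1) = D i)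
    (hg : ∀ i, 2 ≤ i → i ≤ r → ((i : ℚ) - 1) * g i + ((r : ℚ) - i + 1) * g (i - 1) = D i)
    (hr : f r = g r) : ∀ i, 1 ≤ i → i ≤ r → f i = g i := by
  intro i hi hir
  refine Nat.decreasingInduction' (P := fun k => f k = g k) (fun k hkr hik ih => ?_) hir hr
  have hfk := hf (k + 1) (by omega) hkr
  have hgk := hg (k + 1) (by omega) hkr
  rw [Nat.add_sub_cancel, ih] at hfk
  rw [Nat.add_sub_cancel] at hgk
  have hcoef : (r : ℚ) - ↑(k + 1) + 1 ≠ 0 := by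
    have : (k : ℚ) + 1 ≤ r := by exact_mod_cast hkr
    push_cast
    linarith
  exact mul_left_cancel₀ hcoef (by linarith)

theorem eq_of_col_recursion (s : ℕ) (D f g : ℕ → ℚ)
    (hf : ∀ j, 2 ≤ j → j ≤ s → ((j : ℚ) - 1) * f j + ((s : ℚ) - j + 1) * f (j - 1) = D j)
    (hg : ∀ j, 2 ≤ j → j ≤ s → ((j : ℚ) - 1) * g j + ((s : ℚ) - j + 1) * g (j - 1) = D j)
    (h1 : f 1 = g 1) : ∀ j, 1 ≤ j → j ≤ s → f j = g j := by
  intro j hj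
  induction j, hj using Nat.le_induction with
  | base => exact fun _ => h1
  | succ j hj ih =>
    intro hjs
    have hfj := hf (j + 1) (by omega) hjs
    have hgj := hg (j + 1) (by omega) hjs
    rw [Nat.add_sub_cancel, ih (by omega)] at hfj
    rw [Nat.add_sub_cancel] at hgj
    have hcoef : (↑(j + 1) : ℚ) - 1 ≠ 0 := by
      have : (1 : ℚ) ≤ j := by exact_mod_cast hj
      push_cast
      linarith
    exact mul_left_cancel₀ hcoef (by linarith)

theorem upperIndicator_row_recursion (r i : ℕ) (hi : 2 ≤ i) :
    ((i : ℚ) - 1) * upperIndicator i 1 + ((r : ℚ) - i + 1) * upperIndicator (i - 1) 1 =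
      (Dalpha r i 1 : ℚ) := by
  rcases hi.eq_or_lt with rfl | hi
  · simp [upperIndicator, Dalpha]
  · simp [upperIndicator, Dalpha, show ¬ i ≤ 2 by omega, show i ≠ 1 by omega,
      show ¬ i ≤ 1 by omega, show 1 + 1 ≠ i by omega]

theorem upperIndicator_col_recursion (r s i j : ℕ) (hi : 1 ≤ i) (hir : i ≤ r) (hj : 2 ≤ j)
    (hjs : j ≤ s) (hsr : s < r) :
    ((j : ℚ) - 1) * upperIndicator i j + ((s : ℚ) - j + 1) * upperIndicator i (j - 1) =
      (Dbeta r s i j : ℚ) := by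
  unfold upperIndicator Dbeta
  rcases hi.eq_or_lt with rfl | hi
  · simp [show 1 ≤ j - 1 by omega, show 1 ≤ j by omega]
  rcases hir.eq_or_lt with rfl | hir
  · simp [show ¬ i ≤ j by omega, show ¬ i ≤ j - 1 by omega, show i ≠ 1 by omega]
  rcases lt_trichotomy i j with hij | rfl | hij
  · simp [hij.le, show i ≤ j - 1 by omega, show i ≠ 1 by omega, hir.ne, show j ≠ 1 by omega,
      show j ≠ i by omega, hij]
  · simp [show ¬ i ≤ i - 1 by omega, show i ≠ 1 by omega, hir.ne]
  · simp [show ¬ i ≤ j by omega, show ¬ i ≤ j - 1 by omega, show i ≠ 1 by omega, hir.ne,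
      show j ≠ 1 by omega, show j ≠ i by omega, show ¬ i < j by omega]

theorem stmt_18_general (r s : ℕ) (hrs : r = s + 1)
    (C : ℕ → ℕ → ℚ)
    (hrow : ∀ i j : ℕ, 2 ≤ i → i ≤ r → 1 ≤ j → j ≤ s →
      ((i : ℚ) - 1) * C i j + ((r : ℚ) - i + 1) * C (i - 1) j = (Dalpha r i j : ℚ))
    (hcol : ∀ i j : ℕ, 1 ≤ i → i ≤ r → 2 ≤ j → j ≤ s →
      ((j : ℚ) - 1) * C i j + ((s : ℚ) - j + 1) * C i (j - 1) = (Dbeta r s i j : ℚ))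
    (hr1 : C r 1 = 0) :
    ∀ i j : ℕ, 1 ≤ i → i ≤ r → 1 ≤ j → j ≤ s →
      C i j = if i ≤ j then 1 else 0 := by
  intro i j hi hir hj hjs
  have first_col : ∀ i, 1 ≤ i → i ≤ r → C i 1 = upperIndicator i 1 :=
    eq_of_row_recursion r (fun i => Dalpha r i 1) (C · 1) (upperIndicator · 1)
      (fun i hi hir => hrow i 1 hi hir le_rfl (by omega))
      (fun i hi _ => upperIndicator_row_recursion r i hi)
      (by simp [hr1, upperIndicator, show ¬ r ≤ 1 by omega])
  exact eq_of_col_recursion s (fun j => Dbeta r s i j) (C i) (upperIndicator i)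
    (fun j hj hjs => hcol i j hi hir hj hjs)
    (fun j hj hjs => upperIndicator_col_recursion r s i j hi hir hj hjs (by omega))
    (first_col i hi hir) j hj hjs

/-- Uniqueness of the BCJ coefficient matrix for `r = s+1 ≥ 3`: any rational
`r×s` matrix `C` satisfying the row recursion with right-hand side
`D_α^{(1)}`, the column recursion with right-hand side `D_β^{(1)}`, the two
boundary sum conditions, and `C^{r1} = 0`, equals `C^{ij} = [i ≤ j]`. -/
theorem stmt_18 (r s : ℕ) (hs : 2 ≤ s) (hrs : r = s + 1)
    (C : ℕ → ℕ → ℚ)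
    (hrow : ∀ i j : ℕ, 2 ≤ i → i ≤ r → 1 ≤ j → j ≤ s →
      ((i : ℚ) - 1) * C i j + ((r : ℚ) - i + 1) * C (i - 1) j = (Dalpha r i j : ℚ))
    (hcol : ∀ i j : ℕ, 1 ≤ i → i ≤ r → 2 ≤ j → j ≤ s →
      ((j : ℚ) - 1) * C i j + ((s : ℚ) - j + 1) * C i (j - 1) = (Dbeta r s i j : ℚ))
    (hrowsum : ∀ j : ℕ, 1 ≤ j → j ≤ s →
      ∑ i ∈ Finset.Icc 1 r, C i j = (Dalpha r 1 j : ℚ))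
    (hcolsum : ∀ i : ℕ, 1 ≤ i → i ≤ r →
      ∑ j ∈ Finset.Icc 1 s, C i j = (Dbeta r s i 1 : ℚ))
    (hr1 : C r 1 = 0) :
    ∀ i j : ℕ, 1 ≤ i → i ≤ r → 1 ≤ j → j ≤ s →
      C i j = if i ≤ j then 1 else 0 :=
  stmt_18_general r s hrs C hrow hcol hr1
end
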